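/- arXiv:0902.3514 — 3 statements merged into one kernel-verified Lean document; each statement's English description precedes it below -/
import Mathlib

section
/- Let α_K > 0 and c > 0, let T(w, μ, φ) = c √(w(1 + α_K w)) · (μ, √(1 − μ²) cos φ, √(1 − μ²) sin φ) and s(w) = √(w(1 + α_K w)) (1 + 2 α_K w). Then for every integrable function f : ℝ³ → ℝ, ∫_{ℝ³} f(k) dk = (c³/2) ∫₀^∞ ∫_{−1}^{1} ∫₀^{2π} f(T(w, μ, φ)) · s(w) dφ dμ dw. -/
noncomputable section
namespace S4
open MeasureTheory Set Real

def q (αK w : ℝ) : ℝ := w * (1 + αK * w)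
def Rr (αK c w : ℝ) : ℝ := c * Real.sqrt (q αK w)
def Rd (αK c w : ℝ) : ℝ := c * ((1 + 2*αK*w) / (2 * Real.sqrt (q αK w)))
def uu (μ : ℝ) : ℝ := Real.sqrt (1 - μ^2)
def ud (μ : ℝ) : ℝ := -μ / Real.sqrt (1 - μ^2)

abbrev P := Fin 3 → ℝ

def g (αK c : ℝ) (x : P) : P :=
  ![Rr αK c (x 0) * x 1,
    Rr αK c (x 0) * (uu (x 1) * Real.cos (x 2)),
    Rr αK c (x 0) * (uu (x 1) * Real.sin (x 2))]

def S : Set P := {x | 0 < x 0 ∧ x 1 ∈ Ioo (-1:ℝ) 1 ∧ x 2 ∈ Ioo 0 (2*π)}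

def M (αK c : ℝ) (x : P) : Matrix (Fin 3) (Fin 3) ℝ :=
  !![Rd αK c (x 0) * x 1, Rr αK c (x 0), 0;
     Rd αK c (x 0) * (uu (x 1) * Real.cos (x 2)),
       Rr αK c (x 0) * (ud (x 1) * Real.cos (x 2)),
       -(Rr αK c (x 0) * (uu (x 1) * Real.sin (x 2)));
     Rd αK c (x 0) * (uu (x 1) * Real.sin (x 2)),
       Rr αK c (x 0) * (ud (x 1) * Real.sin (x 2)),
       Rr αK c (x 0) * (uu (x 1) * Real.cos (x 2))]

def D (αK c : ℝ) (x : P) : P →L[ℝ] P :=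
  LinearMap.toContinuousLinearMap (Matrix.toLin' (M αK c x))

variable {αK c : ℝ}

section copy
lemma q_pos (hαK : 0 < αK) {w : ℝ} (hw : 0 < w) : 0 < q αK w := by
  have : 0 < 1 + αK * w := by nlinarith
  exact mul_pos hw this
lemma hasDerivAt_q (αK w : ℝ) : HasDerivAt (q αK) (1 + 2*αK*w) w := by
  have h : HasDerivAt (fun w : ℝ => w * (1 + αK * w)) (1 * (1 + αK * w) + w * (αK * 1)) w :=
    (hasDerivAt_id w).mul (((hasDerivAt_id w).const_mul αK).const_add 1)
  exact h.congr_deriv (by ring)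
lemma hasDerivAt_Rr (hαK : 0 < αK) {w : ℝ} (hw : 0 < w) :
    HasDerivAt (Rr αK c) (Rd αK c w) w := by
  have hq := q_pos hαK hw
  have h : HasDerivAt (fun w => Real.sqrt (q αK w)) ((1 + 2*αK*w) / (2 * Real.sqrt (q αK w))) w := by
    have := (Real.hasDerivAt_sqrt (ne_of_gt hq)).comp w (hasDerivAt_q αK w)
    rw [show (1 + 2*αK*w) / (2 * Real.sqrt (q αK w)) = 1/(2*Real.sqrt (q αK w)) * (1 + 2*αK*w) by ring]
    exact this
  exact h.const_mul c
lemma hasDerivAt_uu {μ : ℝ} (hμ : μ ∈ Ioo (-1:ℝ) 1) : HasDerivAt uu (ud μ) μ := by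
  have h1 : (0:ℝ) < 1 - μ^2 := by nlinarith [hμ.1, hμ.2]
  have hq : HasDerivAt (fun μ : ℝ => 1 - μ^2) (-(2*μ)) μ := by
    have := ((hasDerivAt_pow 2 μ)).const_sub 1
    rw [show -(2*μ) = -(↑2 * μ^(2-1)) by norm_num]
    exact this
  have := (Real.hasDerivAt_sqrt (ne_of_gt h1)).comp μ hq
  refine this.congr_deriv ?_
  unfold ud
  field_simp
lemma Rr_pos (hαK : 0 < αK) (hc : 0 < c) {w : ℝ} (hw : 0 < w) : 0 < Rr αK c w :=
  mul_pos hc (Real.sqrt_pos.mpr (q_pos hαK hw))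
lemma Rd_pos (hαK : 0 < αK) (hc : 0 < c) {w : ℝ} (hw : 0 < w) : 0 < Rd αK c w := by
  have hq := q_pos hαK hw
  apply mul_pos hc
  apply div_pos (by nlinarith) (by positivity)
lemma uu_pos {μ : ℝ} (hμ : μ ∈ Ioo (-1:ℝ) 1) : 0 < uu μ := by
  apply Real.sqrt_pos.mpr; nlinarith [hμ.1, hμ.2]
end copy

lemma uu_sq {μ : ℝ} (hμ : μ ∈ Ioo (-1:ℝ) 1) : uu μ * uu μ = 1 - μ^2 :=
  Real.mul_self_sqrt (by nlinarith [hμ.1, hμ.2])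

lemma ud_mul_uu {μ : ℝ} (hμ : μ ∈ Ioo (-1:ℝ) 1) : ud μ * uu μ = -μ := by
  unfold ud uu
  have h1 : (0:ℝ) < 1 - μ^2 := by nlinarith [hμ.1, hμ.2]
  field_simp

lemma hasFDerivAt_g (hαK : 0 < αK) {x : P} (hx : x ∈ S) :
    HasFDerivAt (g αK c) (D αK c x) x := by
  obtain ⟨hw, hμ, hφ⟩ := hx
  have hR : HasFDerivAt (fun y : P => Rr αK c (y 0))
      (Rd αK c (x 0) • (ContinuousLinearMap.proj 0 : P →L[ℝ] ℝ)) x :=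
    by have h := (hasDerivAt_Rr (c := c) hαK hw).comp_hasFDerivAt (f := ⇑(ContinuousLinearMap.proj 0 : P →L[ℝ] ℝ)) x ((ContinuousLinearMap.proj 0 : P →L[ℝ] ℝ).hasFDerivAt); exact h
  have hμ1 : HasFDerivAt (fun y : P => y 1)
      ((ContinuousLinearMap.proj 1 : P →L[ℝ] ℝ)) x :=
    (ContinuousLinearMap.proj 1 : P →L[ℝ] ℝ).hasFDerivAt
  have hU : HasFDerivAt (fun y : P => uu (y 1))
      (ud (x 1) • (ContinuousLinearMap.proj 1 : P →L[ℝ] ℝ)) x :=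
    by have h := (hasDerivAt_uu hμ).comp_hasFDerivAt (f := ⇑(ContinuousLinearMap.proj 1 : P →L[ℝ] ℝ)) x ((ContinuousLinearMap.proj 1 : P →L[ℝ] ℝ).hasFDerivAt); exact h
  have hC : HasFDerivAt (fun y : P => Real.cos (y 2))
      ((-Real.sin (x 2)) • (ContinuousLinearMap.proj 2 : P →L[ℝ] ℝ)) x :=
    by have h := (Real.hasDerivAt_cos (x 2)).comp_hasFDerivAt (f := ⇑(ContinuousLinearMap.proj 2 : P →L[ℝ] ℝ)) x ((ContinuousLinearMap.proj 2 : P →L[ℝ] ℝ).hasFDerivAt); exact h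
  have hSin : HasFDerivAt (fun y : P => Real.sin (y 2))
      ((Real.cos (x 2)) • (ContinuousLinearMap.proj 2 : P →L[ℝ] ℝ)) x :=
    by have h := (Real.hasDerivAt_sin (x 2)).comp_hasFDerivAt (f := ⇑(ContinuousLinearMap.proj 2 : P →L[ℝ] ℝ)) x ((ContinuousLinearMap.proj 2 : P →L[ℝ] ℝ).hasFDerivAt); exact h
  apply hasFDerivAt_pi''
  intro i
  fin_cases i
  · have h := hR.mul' hμ1
    refine h.congr_fderiv ?_
    ext v
    simp [D, M, Matrix.toLin'_apply, Matrix.mulVec, dotProduct, Fin.sum_univ_three,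
      Matrix.cons_val_zero, Matrix.cons_val_one]
    try ring
  · have h := hR.mul' (hU.mul' hC)
    refine h.congr_fderiv ?_
    ext v
    simp [D, M, Matrix.toLin'_apply, Matrix.mulVec, dotProduct, Fin.sum_univ_three]
    ring
  · have h := hR.mul' (hU.mul' hSin)
    refine h.congr_fderiv ?_
    ext v
    simp [D, M, Matrix.toLin'_apply, Matrix.mulVec, dotProduct, Fin.sum_univ_three]
    ring

lemma det_D (hαK : 0 < αK) (hc : 0 < c) {x : P} (hx : x ∈ S) :
    |(D αK c x).det| = c^3/2 * (Real.sqrt (q αK (x 0)) * (1 + 2*αK*(x 0))) := by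
  obtain ⟨hw, hμ, hφ⟩ := hx
  have hdet : (D αK c x).det = (M αK c x).det := by
    simp [D, ContinuousLinearMap.det]
  have hsc : Real.sin (x 2)^2 + Real.cos (x 2)^2 = 1 := Real.sin_sq_add_cos_sq _
  have huu : uu (x 1) * uu (x 1) = 1 - (x 1)^2 := uu_sq hμ
  have hud : ud (x 1) * uu (x 1) = -(x 1) := ud_mul_uu hμ
  have hM : (M αK c x).det = -(Rr αK c (x 0)^2 * Rd αK c (x 0)) := by
    simp [M, Matrix.det_fin_three]
    linear_combination (Rr αK c (x 0)^2 * Rd αK c (x 0) * (x 1) *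
        (Real.sin (x 2)^2 + Real.cos (x 2)^2)) * hud -
      (Rr αK c (x 0)^2 * Rd αK c (x 0) * (Real.sin (x 2)^2 + Real.cos (x 2)^2)) * huu -
      (Rr αK c (x 0)^2 * Rd αK c (x 0)) * hsc
  rw [hdet, hM]
  have hRpos := Rr_pos hαK hc hw
  have hDpos := Rd_pos hαK hc hw
  rw [abs_neg, abs_of_pos (by positivity)]
  have hq := q_pos hαK hw
  have hsq : Real.sqrt (q αK (x 0)) ^ 2 = q αK (x 0) := Real.sq_sqrt hq.le
  have hsqpos : 0 < Real.sqrt (q αK (x 0)) := Real.sqrt_pos.mpr hq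
  unfold Rr Rd
  field_simp

lemma phi_inj {a b : ℝ} (ha : a ∈ Ioo 0 (2*π)) (hb : b ∈ Ioo 0 (2*π))
    (hcos : Real.cos a = Real.cos b) (hsin : Real.sin a = Real.sin b) : a = b := by
  have h := Real.Angle.cos_sin_inj (θ := a) (ψ := b) (by simpa using hcos) (by simpa using hsin)
  rw [Real.Angle.angle_eq_iff_two_pi_dvd_sub] at h
  obtain ⟨k, hk⟩ := h
  have hπ := Real.pi_pos
  have h1 : |(k : ℝ)| < 1 := by
    rw [abs_lt]
    constructor <;> nlinarith [ha.1, ha.2, hb.1, hb.2]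
  have : k = 0 := by
    have h2 := abs_lt.mp h1
    have h3 : (-1:ℤ) < k ∧ k < 1 := by exact_mod_cast h2
    omega
  subst this
  simp at hk
  linarith

lemma sumsq (x : P) (hμ : x 1 ∈ Ioo (-1:ℝ) 1) :
    (g αK c x 0)^2 + (g αK c x 1)^2 + (g αK c x 2)^2 = Rr αK c (x 0) ^ 2 := by
  have huu := uu_sq hμ
  have hsc : Real.sin (x 2)^2 + Real.cos (x 2)^2 = 1 := Real.sin_sq_add_cos_sq _
  simp only [g, Matrix.cons_val_zero, Matrix.cons_val_one, Matrix.head_cons,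
    Matrix.cons_val_two, Matrix.tail_cons]
  linear_combination (Rr αK c (x 0)^2 * (Real.sin (x 2)^2 + Real.cos (x 2)^2)) * huu +
    (Rr αK c (x 0)^2 * (1 - (x 1)^2)) * hsc

lemma injOn_g (hαK : 0 < αK) (hc : 0 < c) : Set.InjOn (g αK c) S := by
  rintro x ⟨hxw, hxμ, hxφ⟩ y ⟨hyw, hyμ, hyφ⟩ h
  have h0 : g αK c x 0 = g αK c y 0 := by rw [h]
  have h1 : g αK c x 1 = g αK c y 1 := by rw [h]
  have h2 : g αK c x 2 = g αK c y 2 := by rw [h]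
  have hR : Rr αK c (x 0) = Rr αK c (y 0) := by
    have hsx := sumsq (αK := αK) (c := c) x hxμ
    have hsy := sumsq (αK := αK) (c := c) y hyμ
    have hRx := Rr_pos hαK hc hxw
    have hRy := Rr_pos hαK hc hyw
    have hsq : Rr αK c (x 0) ^ 2 = Rr αK c (y 0) ^ 2 := by
      rw [← hsx, ← hsy, h0, h1, h2]
    have hfac : (Rr αK c (x 0) - Rr αK c (y 0)) * (Rr αK c (x 0) + Rr αK c (y 0)) = 0 := by
      linear_combination hsq
    rcases mul_eq_zero.mp hfac with h' | h'
    · linarith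
    · linarith
  have hw : x 0 = y 0 := by
    have hqx := q_pos hαK hxw
    have hqy := q_pos hαK hyw
    have hs : Real.sqrt (q αK (x 0)) = Real.sqrt (q αK (y 0)) := by
      have := hR
      unfold Rr at this
      exact mul_left_cancel₀ (ne_of_gt hc) this
    have hq : q αK (x 0) = q αK (y 0) := by
      have : Real.sqrt (q αK (x 0)) ^ 2 = Real.sqrt (q αK (y 0)) ^ 2 := by rw [hs]
      rwa [Real.sq_sqrt hqx.le, Real.sq_sqrt hqy.le] at this
    unfold q at hq
    have hfac : (x 0 - y 0) * (1 + αK * (x 0 + y 0)) = 0 := by linear_combination hq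
    rcases mul_eq_zero.mp hfac with h' | h'
    · linarith
    · nlinarith
  have hRx := Rr_pos hαK hc hxw
  have hμeq : x 1 = y 1 := by
    simp only [g, Matrix.cons_val_zero] at h0
    rw [hR] at h0
    exact mul_left_cancel₀ (ne_of_gt (hR ▸ hRx)) h0
  have hu : uu (x 1) = uu (y 1) := by rw [hμeq]
  have hupos := uu_pos hxμ
  have hRR : Rr αK c (x 0) = Rr αK c (y 0) := hR
  have hcos : Real.cos (x 2) = Real.cos (y 2) := by
    simp only [g, Matrix.cons_val_one, Matrix.head_cons] at h1
    rw [← hRR, ← hμeq] at h1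
    have := mul_left_cancel₀ (ne_of_gt hRx) h1
    exact mul_left_cancel₀ (ne_of_gt hupos) this
  have hsin : Real.sin (x 2) = Real.sin (y 2) := by
    simp only [g, Matrix.cons_val_two, Matrix.tail_cons] at h2
    rw [← hRR, ← hμeq] at h2
    have := mul_left_cancel₀ (ne_of_gt hRx) h2
    exact mul_left_cancel₀ (ne_of_gt hupos) this
  have hφ : x 2 = y 2 := phi_inj hxφ hyφ hcos hsin
  funext i
  fin_cases i
  · exact hw
  · exact hμeq
  · exact hφ

lemma exists_phi {a b ρ : ℝ} (hρ : 0 < ρ) (hab : a^2 + b^2 = ρ^2)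
    (hx : b ≠ 0 ∨ a < 0) :
    ∃ φ ∈ Ioo (0:ℝ) (2*π), Real.cos φ = a / ρ ∧ Real.sin φ = b / ρ := by
  set z : ℂ := ⟨a, b⟩ with hzdef
  have hz : z ≠ 0 := by
    intro h
    rw [Complex.ext_iff] at h
    simp [hzdef] at h
    rcases hx with h2 | h2
    · exact h2 h.2
    · rw [h.1] at h2; exact lt_irrefl 0 h2
  have habs : ‖z‖ = ρ := by
    rw [Complex.norm_def, Complex.normSq_mk]
    rw [show a * a + b * b = ρ^2 by nlinarith]
    exact Real.sqrt_sq hρ.le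
  have hcos : Real.cos z.arg = a / ρ := by rw [Complex.cos_arg hz, habs]
  have hsin : Real.sin z.arg = b / ρ := by rw [Complex.sin_arg, habs]
  have harg1 := Complex.neg_pi_lt_arg z
  have harg2 := Complex.arg_le_pi z
  have hπ := Real.pi_pos
  rcases lt_trichotomy z.arg 0 with h | h | h
  · refine ⟨z.arg + 2*π, ⟨by linarith, by linarith⟩, ?_, ?_⟩
    · rw [Real.cos_add_two_pi]; exact hcos
    · rw [Real.sin_add_two_pi]; exact hsin
  · exfalso
    have := Complex.arg_eq_zero_iff.mp h
    rcases hx with h2 | h2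
    · exact h2 this.2
    · have : (0:ℝ) ≤ a := this.1
      linarith
  · exact ⟨z.arg, ⟨h, by linarith⟩, hcos, hsin⟩

set_option maxHeartbeats 1000000 in
lemma mem_image_g (hαK : 0 < αK) (hc : 0 < c) {x : P}
    (hx : x 2 ≠ 0 ∨ x 1 < 0) : x ∈ g αK c '' S := by
  have hρ2 : 0 < (x 1)^2 + (x 2)^2 := by
    rcases hx with h | h
    · have : 0 < (x 2)^2 := by positivity
      nlinarith [sq_nonneg (x 1)]
    · nlinarith [sq_nonneg (x 2)]
  set r : ℝ := Real.sqrt ((x 0)^2 + (x 1)^2 + (x 2)^2) with hrdef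
  have hr : 0 < r := Real.sqrt_pos.mpr (by nlinarith [sq_nonneg (x 0)])
  have hr2 : r^2 = (x 0)^2 + (x 1)^2 + (x 2)^2 := Real.sq_sqrt (by nlinarith [sq_nonneg (x 0)])
  clear_value r
  set ρ : ℝ := Real.sqrt ((x 1)^2 + (x 2)^2) with hρdef
  have hρ : 0 < ρ := Real.sqrt_pos.mpr hρ2
  have hρsq : ρ^2 = (x 1)^2 + (x 2)^2 := Real.sq_sqrt hρ2.le
  clear_value ρ
  set t : ℝ := (r/c)^2 with htdef
  have ht : 0 < t := by positivity
  clear_value t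
  set Dd : ℝ := 1 + 4*αK*t with hDdef
  have hD1 : 1 < Dd := by nlinarith
  have hDpos : (0:ℝ) ≤ Dd := by linarith
  clear_value Dd
  have hsD : 1 < Real.sqrt Dd := by
    rw [show (1:ℝ) = Real.sqrt 1 by simp]
    exact Real.sqrt_lt_sqrt (by norm_num) hD1
  have hsD2 : Real.sqrt Dd ^ 2 = Dd := Real.sq_sqrt hDpos
  set w : ℝ := (Real.sqrt Dd - 1)/(2*αK) with hwdef
  have hw : 0 < w := by
    apply div_pos (by linarith) (by linarith)
  have key : q αK w * (4*αK) = Real.sqrt Dd^2 - 1 := by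
    unfold q
    rw [hwdef]
    field_simp
    linear_combination
  have hqw : q αK w = t := by
    rw [hsD2, hDdef] at key
    have h4 : q αK w * (4*αK) = t * (4*αK) := by linarith [key]
    exact mul_right_cancel₀ (by positivity) h4
  clear_value w
  have hRw : Rr αK c w = r := by
    unfold Rr
    rw [hqw, htdef, Real.sqrt_sq (by positivity)]
    field_simp
  set μ : ℝ := x 0 / r with hμdef
  clear_value μ
  have hx0sq : (x 0)^2 < r^2 := by nlinarith
  have hμmem : μ ∈ Ioo (-1:ℝ) 1 := by
    constructor
    · rw [hμdef, lt_div_iff₀ hr]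
      nlinarith
    · rw [hμdef, div_lt_one hr]
      nlinarith
  have huur : uu μ * r = ρ := by
    have h1 : (1 - μ^2) = ((x 1)^2 + (x 2)^2)/r^2 := by
      rw [hμdef]
      field_simp
      linear_combination hr2
    rw [show uu μ * r = Real.sqrt (1-μ^2) * Real.sqrt (r^2) by
      rw [Real.sqrt_sq hr.le]; rfl]
    rw [← Real.sqrt_mul (by nlinarith [hμmem.1, hμmem.2] : (0:ℝ) ≤ 1 - μ^2)]
    rw [h1]
    rw [div_mul_cancel₀ _ (by positivity : (r:ℝ)^2 ≠ 0)]
    exact hρdef.symm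
  obtain ⟨φ, hφmem, hφcos, hφsin⟩ := exists_phi hρ (by linarith [hρsq] : (x 1)^2 + (x 2)^2 = ρ^2) hx
  refine ⟨![w, μ, φ], ⟨?_, ?_, ?_⟩, ?_⟩
  · simpa using hw
  · simpa using hμmem
  · simpa using hφmem
  · clear hx hρ2 hrdef hρdef hρsq htdef ht hDdef hD1 hDpos hsD hsD2 hwdef hw key hqw hx0sq hμmem hφmem
    funext i
    fin_cases i
    · simp only [g, Matrix.cons_val_zero, Matrix.cons_val_one, Matrix.head_cons, Fin.zero_eta,
        Fin.isValue]
      rw [hRw, hμdef]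
      field_simp
    · simp only [g, Matrix.cons_val_zero, Matrix.cons_val_one, Matrix.head_cons,
        Matrix.cons_val_two, Matrix.tail_cons, Fin.mk_one, Fin.isValue]
      rw [hRw, hφcos]
      rw [show r * (uu μ * (x 1 / ρ)) = (uu μ * r) * (x 1/ρ) by ring, huur]
      field_simp
    · simp only [g, Matrix.cons_val_zero, Matrix.cons_val_one, Matrix.head_cons,
        Matrix.cons_val_two, Matrix.tail_cons, Fin.isValue]
      rw [hRw, hφsin]
      rw [show r * (uu μ * (x 2 / ρ)) = (uu μ * r) * (x 2/ρ) by ring, huur]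
      field_simp
      rfl


end S4

open MeasureTheory Set Real S4

/-- Change of variables to generalized spherical energy coordinates: for every
integrable `f : ℝ³ → ℝ`,
`∫_{ℝ³} f(k) dk = (c³/2) ∫₀^∞ ∫_{−1}^{1} ∫₀^{2π} f(T(w,μ,φ)) s(w) dφ dμ dw`. -/
theorem stmt_4 (αK c : ℝ) (hαK : 0 < αK) (hc : 0 < c)
    (T : ℝ → ℝ → ℝ → EuclideanSpace ℝ (Fin 3))
    (hT : ∀ w μ φ, T w μ φ = (c * Real.sqrt (w * (1 + αK * w))) •
      (WithLp.equiv 2 (Fin 3 → ℝ)).symm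
        ![μ, Real.sqrt (1 - μ ^ 2) * Real.cos φ, Real.sqrt (1 - μ ^ 2) * Real.sin φ])
    (s : ℝ → ℝ)
    (hs : ∀ w, s w = Real.sqrt (w * (1 + αK * w)) * (1 + 2 * αK * w))
    (f : EuclideanSpace ℝ (Fin 3) → ℝ) (hf : MeasureTheory.Integrable f) :
    ∫ k, f k = c ^ 3 / 2 *
      ∫ w in Set.Ioi (0 : ℝ), ∫ μ in Set.Icc (-1 : ℝ) 1,
        ∫ φ in Set.Icc (0 : ℝ) (2 * Real.pi), f (T w μ φ) * s w := by
  classical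
  set F : S4.P → ℝ := fun x => f ((WithLp.equiv 2 (Fin 3 → ℝ)).symm x) with hF
  set G : S4.P → ℝ := fun x => f (T (x 0) (x 1) (x 2)) * s (x 0) with hG
  have hvol := EuclideanSpace.volume_preserving_symm_measurableEquiv_toLp (Fin 3)
  have hemb := (MeasurableEquiv.toLp 2 (Fin 3 → ℝ)).symm.symm.measurableEmbedding
  have h1 : ∫ k, f k = ∫ x, F x := ((MeasurePreserving.symm _ hvol).integral_comp hemb f).symm
  have hFint : Integrable F := ((MeasurePreserving.symm _ hvol).integrable_comp_emb hemb).mpr hf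
  have hSm : MeasurableSet S4.S := by
    have : S4.S = (fun x : S4.P => x 0) ⁻¹' (Ioi 0) ∩
        ((fun x : S4.P => x 1) ⁻¹' (Ioo (-1) 1) ∩ (fun x : S4.P => x 2) ⁻¹' (Ioo 0 (2*π))) := rfl
    rw [this]
    exact ((measurable_pi_apply 0) measurableSet_Ioi).inter
      (((measurable_pi_apply 1) measurableSet_Ioo).inter
        ((measurable_pi_apply 2) measurableSet_Ioo))
  have hderiv : ∀ x ∈ S4.S, HasFDerivWithinAt (S4.g αK c) (S4.D αK c x) S4.S x :=
    fun x hx => (S4.hasFDerivAt_g hαK hx).hasFDerivWithinAt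
  have hinj := S4.injOn_g (c := c) hαK hc
  have himage_ae : S4.g αK c '' S4.S =ᵐ[volume] univ := by
    rw [ae_eq_univ]
    have hsub : (S4.g αK c '' S4.S)ᶜ ⊆ {x : S4.P | x 2 = 0} := by
      intro x hx
      by_contra hc2
      exact hx (S4.mem_image_g hαK hc (Or.inl hc2))
    refine measure_mono_null hsub ?_
    rw [MeasureTheory.volume_pi]
    exact MeasureTheory.Measure.pi_hyperplane _ 2 0
  have h2 : ∫ x, F x = ∫ x in S4.g αK c '' S4.S, F x := by
    rw [setIntegral_congr_set himage_ae, setIntegral_univ]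
  have h3 : ∫ x in S4.g αK c '' S4.S, F x
      = ∫ x in S4.S, |(S4.D αK c x).det| • F (S4.g αK c x) :=
    integral_image_eq_integral_abs_det_fderiv_smul volume hSm hderiv hinj F
  have hgT : ∀ x : S4.P, (WithLp.equiv 2 (Fin 3 → ℝ)).symm (S4.g αK c x) = T (x 0) (x 1) (x 2) := by
    intro x
    rw [hT]
    have hgx : S4.g αK c x = (c * Real.sqrt ((x 0) * (1 + αK * (x 0)))) •
        ![x 1, Real.sqrt (1 - (x 1)^2) * Real.cos (x 2),
          Real.sqrt (1 - (x 1)^2) * Real.sin (x 2)] := by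
      funext i
      fin_cases i <;> simp [S4.g, S4.Rr, S4.uu, S4.q] <;> ring
    rw [hgx]
    rfl
  have h4 : ∀ x ∈ S4.S, |(S4.D αK c x).det| • F (S4.g αK c x) = c^3/2 * G x := by
    intro x hx
    rw [S4.det_D hαK hc hx, smul_eq_mul, hG, hF]
    simp only []
    rw [hgT x, hs (x 0)]
    rw [show S4.q αK (x 0) = (x 0) * (1 + αK * (x 0)) from rfl]
    ring
  have h5 : ∫ x in S4.S, |(S4.D αK c x).det| • F (S4.g αK c x) = c^3/2 * ∫ x in S4.S, G x := by
    rw [setIntegral_congr_fun hSm h4]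
    exact MeasureTheory.integral_const_mul _ _
  -- integrability of G on S
  have hI1 : IntegrableOn (fun x => |(S4.D αK c x).det| • F (S4.g αK c x)) S4.S :=
    (integrableOn_image_iff_integrableOn_abs_det_fderiv_smul volume hSm hderiv hinj F).mp
      hFint.integrableOn
  have hGint : IntegrableOn G S4.S := by
    have hI2 : IntegrableOn (fun x => c^3/2 * G x) S4.S := hI1.congr_fun h4 hSm
    have hI3 := hI2.const_mul (2/c^3)
    have : (fun x => (2/c^3) * (c^3/2 * G x)) = G := by
      funext x
      field_simp
    rwa [this] at hI3
  -- transport to ℝ × ℝ × ℝ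
  set e3 := (MeasurableEquiv.piFinSuccAbove (fun _ : Fin 3 => ℝ) 0).trans
    ((MeasurableEquiv.refl ℝ).prodCongr MeasurableEquiv.finTwoArrow) with he3
  have hm : MeasurePreserving (⇑e3) volume volume := by
    have hp1 := MeasureTheory.volume_preserving_piFinSuccAbove (fun _ : Fin 3 => ℝ) 0
    have hp2 : MeasurePreserving
        (Prod.map (id : ℝ → ℝ) (⇑(MeasurableEquiv.finTwoArrow : (Fin 2 → ℝ) ≃ᵐ ℝ × ℝ)))
        volume volume := by
      have h := (MeasurePreserving.id (volume : Measure ℝ)).prod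
        (MeasureTheory.volume_preserving_finTwoArrow ℝ)
      rwa [← Measure.volume_eq_prod, ← Measure.volume_eq_prod] at h
    exact hp2.comp hp1
  have hfor : ∀ x : S4.P, e3 x = (x 0, (x 1, x 2)) := by
    intro x
    simp [he3, MeasurableEquiv.trans_apply, MeasurableEquiv.prodCongr,
      MeasurableEquiv.piFinSuccAbove_apply, MeasurableEquiv.finTwoArrow,
      MeasurableEquiv.piFinTwo_apply, Fin.removeNth, Fin.succAbove, Fin.tail,
      Equiv.prodCongr, MeasurableEquiv.coe_mk]
  have heval : ∀ y : ℝ × ℝ × ℝ, (e3.symm y) 0 = y.1 ∧ (e3.symm y) 1 = y.2.1 ∧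
      (e3.symm y) 2 = y.2.2 := by
    intro y
    have h := hfor (e3.symm y)
    rw [e3.apply_symm_apply] at h
    refine ⟨?_, ?_, ?_⟩
    · exact (congrArg Prod.fst h)
    · exact congrArg Prod.fst (congrArg Prod.snd h)
    · exact congrArg Prod.snd (congrArg Prod.snd h)
  set t : Set (ℝ × ℝ × ℝ) := Ioi 0 ×ˢ (Ioo (-1:ℝ) 1 ×ˢ Ioo 0 (2*π)) with ht
  have himg : ⇑e3.symm '' t = ⇑e3 ⁻¹' t := by
    ext x
    constructor
    · rintro ⟨y, hy, rfl⟩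
      rw [mem_preimage, e3.apply_symm_apply]
      exact hy
    · intro hx
      exact ⟨e3 x, hx, e3.symm_apply_apply x⟩
  have hSset : ⇑e3 ⁻¹' t = S4.S := by
    ext x
    rw [mem_preimage, hfor x]
    simp [S4.S, ht, Set.mem_prod]
    try tauto
  have hmsymm : MeasurePreserving (⇑e3.symm) volume volume := MeasurePreserving.symm _ hm
  set G2 : ℝ × ℝ × ℝ → ℝ := fun y => f (T y.1 y.2.1 y.2.2) * s y.1 with hG2
  have hcomp : (fun y => G (e3.symm y)) = G2 := by
    funext y
    obtain ⟨h0, h1', h2'⟩ := heval y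
    simp only [hG, hG2, h0, h1', h2']
  have h6 : ∫ x in S4.S, G x = ∫ y in t, G2 y := by
    rw [← hSset, ← himg]
    rw [hmsymm.setIntegral_image_emb e3.symm.measurableEmbedding G t]
    rw [← hcomp]
  have hG2int : IntegrableOn G2 t := by
    have hres := hmsymm.restrict_image_emb e3.symm.measurableEmbedding t
    have := (hres.integrable_comp_emb e3.symm.measurableEmbedding (g := G)).mpr
      (by rw [himg, hSset]; exact hGint)
    rw [show (G ∘ ⇑e3.symm) = G2 from hcomp] at this
    exact this
  have h7 : ∫ y in t, G2 y = ∫ a in Ioi (0:ℝ), ∫ p in Ioo (-1:ℝ) 1 ×ˢ Ioo 0 (2*π), G2 (a, p) :=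
    setIntegral_prod G2 hG2int
  have hae2 : ∀ᵐ a ∂(volume.restrict (Ioi (0:ℝ))),
      IntegrableOn (fun p => G2 (a, p)) (Ioo (-1:ℝ) 1 ×ˢ Ioo 0 (2*π)) := by
    have h := hG2int
    rw [IntegrableOn, ht, Measure.volume_eq_prod, ← Measure.prod_restrict] at h
    have h' := h.prod_right_ae
    refine h'.mono fun a ha => ?_
    exact ha
  have h8 : ∫ a in Ioi (0:ℝ), ∫ p in Ioo (-1:ℝ) 1 ×ˢ Ioo 0 (2*π), G2 (a, p)
      = ∫ a in Ioi (0:ℝ), ∫ b in Ioo (-1:ℝ) 1, ∫ φ in Ioo 0 (2*π), G2 (a, (b, φ)) := by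
    refine integral_congr_ae (hae2.mono fun a ha => ?_)
    exact setIntegral_prod _ ha
  have h9 : ∀ a : ℝ, (∫ b in Icc (-1:ℝ) 1, ∫ φ in Icc 0 (2*π), G2 (a, (b, φ)))
      = ∫ b in Ioo (-1:ℝ) 1, ∫ φ in Ioo 0 (2*π), G2 (a, (b, φ)) := by
    intro a
    rw [integral_Icc_eq_integral_Ioo]
    refine setIntegral_congr_fun measurableSet_Ioo fun b _ => ?_
    rw [integral_Icc_eq_integral_Ioo]
  calc ∫ k, f k = ∫ x, F x := h1
    _ = ∫ x in S4.g αK c '' S4.S, F x := h2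
    _ = ∫ x in S4.S, |(S4.D αK c x).det| • F (S4.g αK c x) := h3
    _ = c^3/2 * ∫ x in S4.S, G x := h5
    _ = c^3/2 * ∫ y in t, G2 y := by rw [h6]
    _ = c^3/2 * ∫ a in Ioi (0:ℝ), ∫ b in Ioo (-1:ℝ) 1, ∫ φ in Ioo 0 (2*π), G2 (a, (b, φ)) := by
        rw [h7, h8]
    _ = c^3/2 * ∫ w in Set.Ioi (0:ℝ), ∫ μ in Set.Icc (-1:ℝ) 1,
        ∫ φ in Set.Icc (0:ℝ) (2*Real.pi), f (T w μ φ) * s w := by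
        congr 1
        refine integral_congr_ae (Filter.Eventually.of_forall fun a => ?_)
        show (∫ b in Ioo (-1:ℝ) 1, ∫ φ in Ioo 0 (2*π), G2 (a, (b, φ)))
          = ∫ μ in Icc (-1:ℝ) 1, ∫ φ in Icc 0 (2*Real.pi), f (T a μ φ) * s a
        rw [← h9 a]
end
end

section
/- Let α_K > 0 and c > 0, let T(w, μ, φ) = c √(w(1 + α_K w)) · (μ, √(1 − μ²) cos φ, √(1 − μ²) sin φ) and s(w) = √(w(1 + α_K w)) (1 + 2 α_K w). Let f : ℝ³ → ℝ be integrable and define Φ(w, μ, φ) = s(w) f(T(w, μ, φ)). If Φ satisfies the symmetry Φ(w, μ, 2π − φ) = Φ(w, μ, φ) for all w ≥ 0, μ ∈ [−1, 1], φ ∈ [0, 2π], then ∫_{ℝ³} f(k) dk = c³ ∫₀^∞ ∫_{−1}^{1} ∫₀^{π} Φ(w, μ, φ) dφ dμ dw. -/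
open MeasureTheory Set

noncomputable section

namespace Stmt5Aux

variable (α c : ℝ)

def rad (w : ℝ) : ℝ := c * Real.sqrt (w * (1 + α * w))

def rad' (w : ℝ) : ℝ := c * ((1 + 2 * α * w) * (1 / (2 * Real.sqrt (w * (1 + α * w)))))

def qq (μ : ℝ) : ℝ := Real.sqrt (1 - μ ^ 2)

def qq' (μ : ℝ) : ℝ := -(2 * μ) * (1 / (2 * Real.sqrt (1 - μ ^ 2)))

def Fm (x : ℝ × ℝ × ℝ) : ℝ × ℝ × ℝ :=
  (rad α c x.1 * x.2.1,
   rad α c x.1 * qq x.2.1 * Real.cos x.2.2,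
   rad α c x.1 * qq x.2.1 * Real.sin x.2.2)

def SS : Set (ℝ × ℝ × ℝ) := Ioi 0 ×ˢ (Ioo (-1) 1 ×ˢ Ioo 0 Real.pi)

def Mder (x : ℝ × ℝ × ℝ) : Matrix (Fin 3) (Fin 3) ℝ :=
  !![x.2.1 * rad' α c x.1, rad α c x.1, 0;
     qq x.2.1 * Real.cos x.2.2 * rad' α c x.1,
       Real.cos x.2.2 * (rad α c x.1 * qq' x.2.1), -(rad α c x.1 * qq x.2.1 * Real.sin x.2.2);
     qq x.2.1 * Real.sin x.2.2 * rad' α c x.1,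
       Real.sin x.2.2 * (rad α c x.1 * qq' x.2.1), rad α c x.1 * qq x.2.1 * Real.cos x.2.2]

def eL : (Fin 3 → ℝ) ≃ₗ[ℝ] ℝ × ℝ × ℝ where
  toFun v := (v 0, v 1, v 2)
  invFun p := ![p.1, p.2.1, p.2.2]
  map_add' v w := rfl
  map_smul' t v := rfl
  left_inv v := by funext j; fin_cases j <;> rfl
  right_inv p := rfl

def eCL : (Fin 3 → ℝ) ≃L[ℝ] ℝ × ℝ × ℝ := (eL).toContinuousLinearEquiv

def Fd (x : ℝ × ℝ × ℝ) : (ℝ × ℝ × ℝ) →L[ℝ] (ℝ × ℝ × ℝ) :=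
  ((eCL : (Fin 3 → ℝ) →L[ℝ] ℝ × ℝ × ℝ).comp
    ((LinearMap.toContinuousLinearMap (Matrix.toLin' (Mder α c x))).comp
      (eCL.symm : (ℝ × ℝ × ℝ) →L[ℝ] (Fin 3 → ℝ))))

lemma det_Fd (x : ℝ × ℝ × ℝ) : (Fd α c x).det = (Mder α c x).det := by
  have h : (Fd α c x).toLinearMap =
      (eL : (Fin 3 → ℝ) →ₗ[ℝ] ℝ × ℝ × ℝ) ∘ₗ (Matrix.toLin' (Mder α c x)) ∘ₗ
        (eL.symm : (ℝ × ℝ × ℝ) →ₗ[ℝ] (Fin 3 → ℝ)) := by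
    rfl
  rw [ContinuousLinearMap.det, h, LinearMap.det_conj, LinearMap.det_toLin']
variable {α c : ℝ}

lemma upos {w : ℝ} (hα : 0 < α) (hw : 0 < w) : 0 < w * (1 + α * w) := by nlinarith [sq_nonneg w, mul_pos hw (mul_pos hα hw)]

lemma hasDerivAt_rad (hα : 0 < α) {w : ℝ} (hw : 0 < w) :
    HasDerivAt (fun w => c * Real.sqrt (w * (1 + α * w)))
      (c * ((1 + 2 * α * w) * (1 / (2 * Real.sqrt (w * (1 + α * w)))))) w := by
  have h1 : HasDerivAt (fun w : ℝ => w * (1 + α * w)) (1 + 2 * α * w) w := by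
    have := (hasDerivAt_id w).mul (((hasDerivAt_id w).const_mul α).const_add 1)
    exact this.congr_deriv (by simp only [id]; ring)
  have h2 := (Real.hasDerivAt_sqrt (ne_of_gt (upos hα hw))).comp w h1
  have h3 := h2.const_mul c
  have he : (fun y => c * ((fun x => √x) ∘ fun w => w * (1 + α * w)) y)
      = (fun w => c * Real.sqrt (w * (1 + α * w))) := rfl
  rw [he] at h3
  exact h3.congr_deriv (by ring)

lemma hasDerivAt_qq {μ : ℝ} (hμ : μ ∈ Ioo (-1:ℝ) 1) :
    HasDerivAt (fun μ => Real.sqrt (1 - μ ^ 2))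
      (-(2 * μ) * (1 / (2 * Real.sqrt (1 - μ ^ 2)))) μ := by
  obtain ⟨h1, h2⟩ := hμ
  have hq : (0:ℝ) < 1 - μ ^ 2 := by nlinarith
  have hd : HasDerivAt (fun μ : ℝ => 1 - μ ^ 2) (-(2 * μ)) μ := by
    have := ((hasDerivAt_pow 2 μ).const_sub 1)
    exact this.congr_deriv (by norm_num)
  have := (Real.hasDerivAt_sqrt (ne_of_gt hq)).comp μ hd
  exact this.congr_deriv (by ring)



section FD
open Stmt5Aux ContinuousLinearMap
variable (α c : ℝ)

set_option maxHeartbeats 2000000 in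
lemma hasFDerivAt_Fm (hα : 0 < α) {x : ℝ × ℝ × ℝ} (hx : x ∈ SS) :
    HasFDerivAt (Fm α c) (Fd α c x) x := by
  obtain ⟨hw, hμ, hφ⟩ := hx
  set p1 : (ℝ × ℝ × ℝ) →L[ℝ] ℝ := fst ℝ ℝ (ℝ × ℝ) with hp1
  set p2 : (ℝ × ℝ × ℝ) →L[ℝ] ℝ := (fst ℝ ℝ ℝ).comp (snd ℝ ℝ (ℝ × ℝ)) with hp2
  set p3 : (ℝ × ℝ × ℝ) →L[ℝ] ℝ := (snd ℝ ℝ ℝ).comp (snd ℝ ℝ (ℝ × ℝ)) with hp3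
  have h1 : HasFDerivAt (fun y : ℝ × ℝ × ℝ => y.1) p1 x := hasFDerivAt_fst
  have h2 : HasFDerivAt (fun y : ℝ × ℝ × ℝ => y.2.1) p2 x :=
    hasFDerivAt_fst.comp x hasFDerivAt_snd
  have h3 : HasFDerivAt (fun y : ℝ × ℝ × ℝ => y.2.2) p3 x :=
    hasFDerivAt_snd.comp x hasFDerivAt_snd
  have hr : HasFDerivAt (fun y : ℝ × ℝ × ℝ => rad α c y.1) (rad' α c x.1 • p1) x :=
    (hasDerivAt_rad hα hw).comp_hasFDerivAt x h1
  have hq : HasFDerivAt (fun y : ℝ × ℝ × ℝ => qq y.2.1) (qq' x.2.1 • p2) x :=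
    by have := (hasDerivAt_qq hμ).comp_hasFDerivAt x h2; exact this
  have hcos : HasFDerivAt (fun y : ℝ × ℝ × ℝ => Real.cos y.2.2)
      ((-Real.sin x.2.2) • p3) x :=
    by have := (Real.hasDerivAt_cos x.2.2).comp_hasFDerivAt x h3; exact this
  have hsin : HasFDerivAt (fun y : ℝ × ℝ × ℝ => Real.sin y.2.2)
      ((Real.cos x.2.2) • p3) x :=
    by have := (Real.hasDerivAt_sin x.2.2).comp_hasFDerivAt x h3; exact this
  have c0 := hr.mul h2
  have c1 := (hr.mul hq).mul hcos
  have c2 := (hr.mul hq).mul hsin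
  have H := c0.prodMk (c1.prodMk c2)
  have hFm : (Fm α c) = fun y : ℝ × ℝ × ℝ =>
      (rad α c y.1 * y.2.1,
       rad α c y.1 * qq y.2.1 * Real.cos y.2.2,
       rad α c y.1 * qq y.2.1 * Real.sin y.2.2) := rfl
  rw [hFm]
  refine H.congr_fderiv (Eq.symm ?_)
  apply ContinuousLinearMap.ext
  intro v
  have hμ2 : (0:ℝ) < 1 - x.2.1 ^ 2 := by obtain ⟨a,b⟩ := hμ; nlinarith
  have hfd : Fd α c x v =
      ((Mder α c x).mulVec ![v.1, v.2.1, v.2.2] 0,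
       (Mder α c x).mulVec ![v.1, v.2.1, v.2.2] 1,
       (Mder α c x).mulVec ![v.1, v.2.1, v.2.2] 2) := by
    show eCL ((Matrix.toLin' (Mder α c x)) (eCL.symm v)) = _
    rw [eCL, LinearEquiv.coe_toContinuousLinearEquiv_symm', LinearEquiv.coe_toContinuousLinearEquiv',
      show (eL.symm v : Fin 3 → ℝ) = ![v.1, v.2.1, v.2.2] from rfl, Matrix.toLin'_apply]
    rfl
  rw [hfd]
  refine Prod.ext ?_ (Prod.ext ?_ ?_) <;>
    simp [Mder, Matrix.mulVec, dotProduct, Fin.sum_univ_three, smul_eq_mul, hp1, hp2, hp3,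
      ContinuousLinearMap.coe_comp', Function.comp, ContinuousLinearMap.coe_fst',
      ContinuousLinearMap.coe_snd'] <;> ring
end FD

lemma abs_det_Fd (hα : 0 < α) (hc : 0 < c) {x : ℝ × ℝ × ℝ} (hx : x ∈ SS) :
    |(Fd α c x).det| =
      c ^ 3 * (Real.sqrt (x.1 * (1 + α * x.1)) * (1 + 2 * α * x.1)) / 2 := by
  obtain ⟨hw, hμ, hφ⟩ := hx
  have hu : 0 < Real.sqrt (x.1 * (1 + α * x.1)) := Real.sqrt_pos.mpr (upos hα hw)
  have hq2' : (0:ℝ) < 1 - x.2.1 ^ 2 := by obtain ⟨a,b⟩ := hμ; nlinarith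
  have hq : 0 < Real.sqrt (1 - x.2.1 ^ 2) := Real.sqrt_pos.mpr hq2'
  have hq2 : Real.sqrt (1 - x.2.1 ^ 2) ^ 2 = 1 - x.2.1 ^ 2 := Real.sq_sqrt hq2'.le
  have hAB : Real.sin x.2.2 ^ 2 + Real.cos x.2.2 ^ 2 = 1 := Real.sin_sq_add_cos_sq _
  have h1w : (0:ℝ) < 1 + 2 * α * x.1 := by
    have := hw.out; nlinarith
  have hdet : (Fd α c x).det =
      -(c ^ 3 * (Real.sqrt (x.1 * (1 + α * x.1)) * (1 + 2 * α * x.1)) / 2) := by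
    rw [det_Fd]
    simp only [Mder, Matrix.det_fin_three, Matrix.cons_val', Matrix.cons_val_zero,
      Matrix.cons_val_one, Matrix.head_cons, Matrix.empty_val', Matrix.cons_val_fin_one,
      Matrix.head_fin_const, Matrix.of_apply, Matrix.cons_val_two, Matrix.tail_cons]
    unfold rad rad' qq qq'
    set u := Real.sqrt (x.1 * (1 + α * x.1))
    set q := Real.sqrt (1 - x.2.1 ^ 2)
    field_simp
    ring_nf
    linear_combination (-c*u*(x.2.1^2+q^2)) * hAB +
      (-c*u) * hq2
  rw [hdet, abs_neg, abs_of_pos]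
  positivity

lemma rad_pos (hα : 0 < α) (hc : 0 < c) {w : ℝ} (hw : 0 < w) : 0 < rad α c w :=
  mul_pos hc (Real.sqrt_pos.mpr (upos hα hw))

lemma qq_pos {μ : ℝ} (hμ : μ ∈ Ioo (-1:ℝ) 1) : 0 < qq μ := by
  obtain ⟨a, b⟩ := hμ
  exact Real.sqrt_pos.mpr (by nlinarith)

lemma qq_sq {μ : ℝ} (hμ : μ ∈ Ioo (-1:ℝ) 1) : qq μ ^ 2 = 1 - μ ^ 2 := by
  obtain ⟨a, b⟩ := hμ
  exact Real.sq_sqrt (by nlinarith)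

lemma norm_sq_Fm (hα : 0 < α) (hc : 0 < c) {x : ℝ × ℝ × ℝ} (hx : x ∈ SS) :
    (Fm α c x).1 ^ 2 + ((Fm α c x).2.1 ^ 2 + (Fm α c x).2.2 ^ 2) = rad α c x.1 ^ 2 := by
  obtain ⟨hw, hμ, hφ⟩ := hx
  have hq2 := qq_sq hμ
  have hAB : Real.sin x.2.2 ^ 2 + Real.cos x.2.2 ^ 2 = 1 := Real.sin_sq_add_cos_sq _
  show (rad α c x.1 * x.2.1) ^ 2 + ((rad α c x.1 * qq x.2.1 * Real.cos x.2.2) ^ 2 +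
    (rad α c x.1 * qq x.2.1 * Real.sin x.2.2) ^ 2) = rad α c x.1 ^ 2
  linear_combination (rad α c x.1 ^ 2 * qq x.2.1 ^ 2) * hAB +
    (rad α c x.1 ^ 2) * hq2

lemma injOn_Fm (hα : 0 < α) (hc : 0 < c) : Set.InjOn (Fm α c) SS := by
  rintro x hx y hy hxy
  obtain ⟨hxw, hxμ, hxφ⟩ := hx
  obtain ⟨hyw, hyμ, hyφ⟩ := hy
  have hrx : 0 < rad α c x.1 := rad_pos hα hc hxw
  have hry : 0 < rad α c y.1 := rad_pos hα hc hyw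
  have hqx : 0 < qq x.2.1 := qq_pos hxμ
  have hqy : 0 < qq y.2.1 := qq_pos hyμ
  have hnx := norm_sq_Fm hα hc (show x ∈ SS from ⟨hxw, hxμ, hxφ⟩)
  have hny := norm_sq_Fm hα hc (show y ∈ SS from ⟨hyw, hyμ, hyφ⟩)
  rw [hxy] at hnx
  have hr : rad α c x.1 = rad α c y.1 := by nlinarith [hnx, hny]
  have hw : x.1 = y.1 := by
    have h1 : Real.sqrt (x.1 * (1 + α * x.1)) = Real.sqrt (y.1 * (1 + α * y.1)) := by
      have := hr; unfold rad at this
      exact mul_left_cancel₀ (ne_of_gt hc) this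
    have h2 : x.1 * (1 + α * x.1) = y.1 * (1 + α * y.1) := by
      have h3 := congrArg (fun t => t ^ 2) h1
      simpa [Real.sq_sqrt (upos hα hxw).le, Real.sq_sqrt (upos hα hyw).le] using h3
    have key : ∀ u v : ℝ, 0 < u → 0 < v → u < v → u * (1 + α * u) < v * (1 + α * v) := by
      intro u v hu hv huv
      nlinarith [mul_pos (sub_pos.mpr huv) (mul_pos hα (add_pos hu hv))]
    by_contra h
    rcases Ne.lt_or_gt h with hlt | hlt
    · linarith [key _ _ hxw.out hyw.out hlt]
    · linarith [key _ _ hyw.out hxw.out hlt]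
  have h1 : (Fm α c x).1 = (Fm α c y).1 := by rw [hxy]
  have hμeq : x.2.1 = y.2.1 := by
    have : rad α c x.1 * x.2.1 = rad α c x.1 * y.2.1 := by
      show (Fm α c x).1 = rad α c x.1 * y.2.1
      rw [h1]; show rad α c y.1 * y.2.1 = _; rw [hw]
    exact mul_left_cancel₀ (ne_of_gt hrx) this
  have h2 : (Fm α c x).2.1 = (Fm α c y).2.1 := by rw [hxy]
  have hcos : Real.cos x.2.2 = Real.cos y.2.2 := by
    have : rad α c x.1 * qq x.2.1 * Real.cos x.2.2
        = rad α c x.1 * qq x.2.1 * Real.cos y.2.2 := by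
      show (Fm α c x).2.1 = _
      rw [h2]; show rad α c y.1 * qq y.2.1 * Real.cos y.2.2 = _; rw [hw, hμeq]
    exact mul_left_cancel₀ (ne_of_gt (mul_pos hrx hqx)) this
  have hφeq : x.2.2 = y.2.2 :=
    Real.injOn_cos ⟨hxφ.1.le, hxφ.2.le⟩ ⟨hyφ.1.le, hyφ.2.le⟩ hcos
  exact Prod.ext hw (Prod.ext hμeq hφeq)

lemma image_Fm (hα : 0 < α) (hc : 0 < c) :
    Fm α c '' SS = {p : ℝ × ℝ × ℝ | 0 < p.2.2} := by
  ext p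
  constructor
  · rintro ⟨x, ⟨hw, hμ, hφ⟩, rfl⟩
    exact mul_pos (mul_pos (rad_pos hα hc hw) (qq_pos hμ))
      (Real.sin_pos_of_pos_of_lt_pi hφ.1 hφ.2)
  · intro hp
    obtain ⟨a, b, d⟩ := p
    simp only [Set.mem_setOf_eq] at hp
    set R := Real.sqrt (a ^ 2 + b ^ 2 + d ^ 2) with hRdef
    have hR : 0 < R := Real.sqrt_pos.mpr (by nlinarith)
    have hR2 : R ^ 2 = a ^ 2 + b ^ 2 + d ^ 2 := Real.sq_sqrt (by positivity)
    set ρ := Real.sqrt (b ^ 2 + d ^ 2) with hρdef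
    have hρ : 0 < ρ := Real.sqrt_pos.mpr (by nlinarith)
    have hρ2 : ρ ^ 2 = b ^ 2 + d ^ 2 := Real.sq_sqrt (by positivity)
    set t := (R / c) ^ 2 with htdef
    have ht : 0 < t := by positivity
    set D := Real.sqrt (1 + 4 * α * t) with hDdef
    have hD2 : D ^ 2 = 1 + 4 * α * t := Real.sq_sqrt (by positivity)
    have hD1 : 1 < D := by
      rw [show (1:ℝ) = Real.sqrt 1 from (Real.sqrt_one).symm, hDdef]
      exact Real.sqrt_lt_sqrt (by norm_num) (by nlinarith)
    set w := (D - 1) / (2 * α) with hwdef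
    have hw : 0 < w := div_pos (by linarith) (by linarith)
    have hwt : w * (1 + α * w) = t := by
      have h4 : w * (1 + α * w) = (D ^ 2 - 1) / (4 * α) := by
        rw [hwdef]; field_simp; ring
      rw [h4, hD2]; field_simp; ring
    have hradw : rad α c w = R := by
      unfold rad
      rw [hwt, htdef, Real.sqrt_sq (by positivity)]
      field_simp
    set μ := a / R with hμdef
    have hμmem : μ ∈ Ioo (-1:ℝ) 1 := by
      constructor
      · rw [hμdef, lt_div_iff₀ hR]; nlinarith
      · rw [hμdef, div_lt_iff₀ hR]; nlinarith
    have hqμ : qq μ = ρ / R := by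
      unfold qq
      rw [show 1 - μ ^ 2 = (ρ / R) ^ 2 by rw [hμdef]; field_simp; linear_combination hR2 - hρ2]
      exact Real.sqrt_sq (by positivity)
    have hbρ1 : -1 < b / ρ := by rw [lt_div_iff₀ hρ]; nlinarith
    have hbρ2 : b / ρ < 1 := by rw [div_lt_iff₀ hρ]; nlinarith
    set φ := Real.arccos (b / ρ) with hφdef
    have hφmem : φ ∈ Ioo 0 Real.pi := by
      constructor
      · exact Real.arccos_pos.mpr hbρ2
      · refine lt_of_le_of_ne (Real.arccos_le_pi _) fun h => ?_
        have := Real.arccos_eq_pi.mp h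
        linarith
    have hcos : Real.cos φ = b / ρ := Real.cos_arccos hbρ1.le hbρ2.le
    have hsin : Real.sin φ = d / ρ := by
      rw [hφdef, Real.sin_arccos,
        show 1 - (b / ρ) ^ 2 = (d / ρ) ^ 2 by field_simp; linear_combination hρ2]
      exact Real.sqrt_sq (by positivity)
    refine ⟨(w, μ, φ), ⟨hw, hμmem, hφmem⟩, ?_⟩
    show (rad α c w * μ, rad α c w * qq μ * Real.cos φ, rad α c w * qq μ * Real.sin φ)
      = (a, b, d)
    rw [hradw, hqμ, hcos, hsin, hμdef]
    refine Prod.ext ?_ (Prod.ext ?_ ?_) <;> simp only <;> field_simp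

def me3 : (ℝ × ℝ × ℝ) ≃ᵐ EuclideanSpace ℝ (Fin 3) :=
  ((MeasurableEquiv.refl ℝ).prodCongr MeasurableEquiv.finTwoArrow.symm).trans
    ((MeasurableEquiv.piFinSuccAbove (fun _ : Fin 3 => ℝ) 0).symm.trans
      (MeasurableEquiv.toLp 2 (Fin 3 → ℝ)))

lemma me3_measurePreserving : MeasurePreserving me3 volume volume := by
  have h1 : MeasurePreserving
      (⇑((MeasurableEquiv.refl ℝ).prodCongr MeasurableEquiv.finTwoArrow.symm))
      (volume : Measure (ℝ × ℝ × ℝ)) volume :=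
    (MeasurePreserving.id volume).prod (volume_preserving_finTwoArrow ℝ).symm
  have h2 : MeasurePreserving
      (⇑(MeasurableEquiv.piFinSuccAbove (fun _ : Fin 3 => ℝ) 0).symm)
      volume volume :=
    (volume_preserving_piFinSuccAbove (fun _ : Fin 3 => ℝ) 0).symm
  have h3 : MeasurePreserving (⇑(MeasurableEquiv.toLp 2 (Fin 3 → ℝ)))
      volume volume :=
    (EuclideanSpace.volume_preserving_symm_measurableEquiv_toLp (Fin 3)).symm
  exact ((h3.comp h2).comp h1 : _)

lemma me3_apply (p : ℝ × ℝ × ℝ) :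
    me3 p = (WithLp.equiv 2 (Fin 3 → ℝ)).symm ![p.1, p.2.1, p.2.2] := by
  obtain ⟨a, b, d⟩ := p
  show (MeasurableEquiv.toLp 2 (Fin 3 → ℝ))
      ((MeasurableEquiv.piFinSuccAbove (fun _ : Fin 3 => ℝ) 0).symm
        (a, MeasurableEquiv.finTwoArrow.symm (b, d))) = _
  apply (WithLp.equiv 2 (Fin 3 → ℝ)).injective
  funext j
  fin_cases j <;> rfl

def negl : (ℝ × ℝ × ℝ) ≃ᵐ (ℝ × ℝ × ℝ) :=
  (MeasurableEquiv.refl ℝ).prodCongr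
    ((MeasurableEquiv.refl ℝ).prodCongr (Homeomorph.neg ℝ).toMeasurableEquiv)

lemma negl_measurePreserving : MeasurePreserving negl volume volume := by
  exact (MeasurePreserving.id volume).prod
    ((MeasurePreserving.id volume).prod (Measure.measurePreserving_neg volume))

lemma negl_apply (p : ℝ × ℝ × ℝ) : negl p = (p.1, p.2.1, -p.2.2) := rfl

end Stmt5Aux


instance : (volume : Measure (ℝ × ℝ)).IsAddHaarMeasure := by
  rw [Measure.volume_eq_prod]; infer_instance
instance : (volume : Measure (ℝ × ℝ × ℝ)).IsAddHaarMeasure := by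
  rw [Measure.volume_eq_prod]; infer_instance

open Stmt5Aux

/-- If `Φ(w,μ,φ) = s(w) f(T(w,μ,φ))` satisfies the symmetry
`Φ(w,μ,2π−φ) = Φ(w,μ,φ)`, then
`∫_{ℝ³} f(k) dk = c³ ∫₀^∞ ∫_{−1}^{1} ∫₀^{π} Φ(w,μ,φ) dφ dμ dw`. -/
theorem stmt_5 (αK c : ℝ) (hαK : 0 < αK) (hc : 0 < c)
    (T : ℝ → ℝ → ℝ → EuclideanSpace ℝ (Fin 3))
    (hT : ∀ w μ φ, T w μ φ = (c * Real.sqrt (w * (1 + αK * w))) •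
      (WithLp.equiv 2 (Fin 3 → ℝ)).symm
        ![μ, Real.sqrt (1 - μ ^ 2) * Real.cos φ, Real.sqrt (1 - μ ^ 2) * Real.sin φ])
    (s : ℝ → ℝ)
    (hs : ∀ w, s w = Real.sqrt (w * (1 + αK * w)) * (1 + 2 * αK * w))
    (f : EuclideanSpace ℝ (Fin 3) → ℝ) (hf : MeasureTheory.Integrable f)
    (Φ : ℝ → ℝ → ℝ → ℝ)
    (hΦ : ∀ w μ φ, Φ w μ φ = s w * f (T w μ φ))
    (hsym : ∀ w, 0 ≤ w → ∀ μ ∈ Set.Icc (-1 : ℝ) 1, ∀ φ ∈ Set.Icc (0 : ℝ) (2 * Real.pi),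
      Φ w μ (2 * Real.pi - φ) = Φ w μ φ) :
    ∫ k, f k = c ^ 3 *
      ∫ w in Set.Ioi (0 : ℝ), ∫ μ in Set.Icc (-1 : ℝ) 1,
        ∫ φ in Set.Icc (0 : ℝ) Real.pi, Φ w μ φ := by
  have pi_pos := Real.pi_pos
  set g : ℝ × ℝ × ℝ → ℝ := fun p => f (me3 p) with hgdef
  have hg : Integrable g := by
    have := (me3_measurePreserving.integrable_comp_emb me3.measurableEmbedding (g := f)).mpr hf
    exact this
  -- Fm corresponds to T through me3
  have hTF : ∀ x ∈ SS, me3 (Fm αK c x) = T x.1 x.2.1 x.2.2 := by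
    intro x hx
    rw [me3_apply, hT]
    ext j
    fin_cases j <;>
      simp [Fm, rad, qq, WithLp.equiv_symm_apply, PiLp.toLp_apply, PiLp.smul_apply, smul_eq_mul] <;> ring
  have hs_pos : ∀ w : ℝ, 0 < w → 0 < s w := by
    intro w hw
    rw [hs]
    have h1 : 0 < Real.sqrt (w * (1 + αK * w)) := Real.sqrt_pos.mpr (upos hαK hw)
    exact mul_pos h1 (by nlinarith)
  -- symmetry of g under reflection, on the image
  have hgsym : ∀ p ∈ {q : ℝ × ℝ × ℝ | 0 < q.2.2}, g (negl p) = g p := by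
    intro p hp
    rw [← image_Fm hαK hc] at hp
    obtain ⟨x, hx, rfl⟩ := hp
    obtain ⟨hw, hμ, hφ⟩ := hx
    have h1 : me3 (negl (Fm αK c x)) = T x.1 x.2.1 (2 * Real.pi - x.2.2) := by
      rw [negl_apply, me3_apply, hT]
      ext j
      fin_cases j <;>
        simp [Fm, rad, qq, Real.cos_sub, Real.sin_sub, WithLp.equiv_symm_apply, PiLp.toLp_apply,
          PiLp.smul_apply, smul_eq_mul] <;> ring
    have h2 := hTF x ⟨hw, hμ, hφ⟩
    show f (me3 (negl (Fm αK c x))) = f (me3 (Fm αK c x))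
    rw [h1, h2]
    have hsym' := hsym x.1 (le_of_lt hw) x.2.1 ⟨hμ.1.le, hμ.2.le⟩ x.2.2
      ⟨hφ.1.le, by linarith [hφ.2]⟩
    rw [hΦ, hΦ] at hsym'
    exact mul_left_cancel₀ (ne_of_gt (hs_pos x.1 hw)) hsym'
  -- split the integral at the plane
  set A : Set (ℝ × ℝ × ℝ) := {p | 0 < p.2.2} with hAdef
  have hAmeas : MeasurableSet A :=
    measurableSet_lt measurable_const (measurable_snd.comp measurable_snd)
  have hplane : volume {p : ℝ × ℝ × ℝ | p.2.2 = 0} = 0 := by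
    have he : {p : ℝ × ℝ × ℝ | p.2.2 = 0}
        = (Set.univ : Set ℝ) ×ˢ ((Set.univ : Set ℝ) ×ˢ ({0} : Set ℝ)) := by
      ext ⟨a, b, d⟩; simp [Prod.ext_iff, eq_comm]
    rw [he, Measure.volume_eq_prod, Measure.prod_prod, Measure.volume_eq_prod,
      Measure.prod_prod]
    simp
  have hsplit := integral_add_compl hAmeas hg
  have hcompl : (Aᶜ : Set (ℝ × ℝ × ℝ)) =ᵐ[volume] {p : ℝ × ℝ × ℝ | p.2.2 < 0} := by
    rw [MeasureTheory.ae_eq_set]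
    constructor
    · refine measure_mono_null (fun p hp => ?_) hplane
      obtain ⟨hp1, hp2⟩ := hp
      simp only [hAdef, Set.mem_compl_iff, Set.mem_setOf_eq, not_lt] at hp1 hp2 ⊢
      linarith [hp2, hp1]
    · refine measure_mono_null (fun p hp => ?_) hplane
      obtain ⟨hp1, hp2⟩ := hp
      simp only [hAdef, Set.mem_compl_iff, Set.mem_setOf_eq, not_not, not_lt] at hp1 hp2 ⊢
      linarith
  have hBA : ∫ p in {p : ℝ × ℝ × ℝ | p.2.2 < 0}, g p = ∫ p in A, g p := by
    have hpre : negl ⁻¹' {p : ℝ × ℝ × ℝ | p.2.2 < 0} = A := by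
      ext p
      simp [negl_apply, hAdef]
    rw [← negl_measurePreserving.setIntegral_preimage_emb negl.measurableEmbedding g
      {p : ℝ × ℝ × ℝ | p.2.2 < 0}, hpre]
    exact setIntegral_congr_fun hAmeas fun p hp => hgsym p hp
  have hdouble : ∫ p, g p = 2 * ∫ p in A, g p := by
    rw [← hsplit, setIntegral_congr_set hcompl, hBA]; ring
  -- change of variables
  have hSSmeas : MeasurableSet SS :=
    measurableSet_Ioi.prod (measurableSet_Ioo.prod measurableSet_Ioo)
  have hderiv : ∀ x ∈ SS, HasFDerivWithinAt (Fm αK c) (Fd αK c x) SS x :=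
    fun x hx => (hasFDerivAt_Fm αK c hαK hx).hasFDerivWithinAt
  have hCOV := integral_image_eq_integral_abs_det_fderiv_smul volume hSSmeas hderiv
    (injOn_Fm hαK hc) g
  rw [image_Fm hαK hc] at hCOV
  have hInt : IntegrableOn (fun x => |(Fd αK c x).det| • g (Fm αK c x)) SS volume := by
    rw [← integrableOn_image_iff_integrableOn_abs_det_fderiv_smul volume hSSmeas hderiv
      (injOn_Fm hαK hc) g]
    exact hg.integrableOn
  have hPhiEq : ∀ x ∈ SS, |(Fd αK c x).det| • g (Fm αK c x)
      = c ^ 3 / 2 * Φ x.1 x.2.1 x.2.2 := by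
    intro x hx
    rw [abs_det_Fd hαK hc hx, smul_eq_mul, hΦ, ← hTF x hx, hs]
    ring
  have hPhiInt : IntegrableOn (fun x : ℝ × ℝ × ℝ => Φ x.1 x.2.1 x.2.2) SS := by
    refine MeasureTheory.IntegrableOn.congr_fun
      (show IntegrableOn (fun x => 2 / c ^ 3 * (|(Fd αK c x).det| • g (Fm αK c x))) SS volume
        from hInt.const_mul (2 / c ^ 3)) (fun x hx => ?_) hSSmeas
    rw [hPhiEq x hx]
    field_simp
  have hAint : ∫ p in A, g p = c ^ 3 / 2 * ∫ x in SS, Φ x.1 x.2.1 x.2.2 := by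
    rw [hCOV, setIntegral_congr_fun hSSmeas hPhiEq, MeasureTheory.integral_const_mul]
  -- Fubini
  set μ1 := (volume : Measure ℝ).restrict (Set.Ioi (0:ℝ)) with hμ1
  set μ2 := (volume : Measure ℝ).restrict (Set.Ioo (-1:ℝ) 1) with hμ2
  set μ3 := (volume : Measure ℝ).restrict (Set.Ioo (0:ℝ) Real.pi) with hμ3
  have hres : (volume : Measure (ℝ × ℝ × ℝ)).restrict SS = μ1.prod (μ2.prod μ3) := by
    rw [show SS = Set.Ioi (0:ℝ) ×ˢ (Set.Ioo (-1:ℝ) 1 ×ˢ Set.Ioo 0 Real.pi) from rfl,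
      Measure.volume_eq_prod, ← Measure.prod_restrict, Measure.volume_eq_prod,
      ← Measure.prod_restrict]
  have hPhiInt2 : Integrable (fun x : ℝ × ℝ × ℝ => Φ x.1 x.2.1 x.2.2)
      (μ1.prod (μ2.prod μ3)) := by
    rw [← hres]; exact hPhiInt
  have hFub : ∫ x in SS, Φ x.1 x.2.1 x.2.2
      = ∫ w in Set.Ioi (0:ℝ), ∫ μ in Set.Ioo (-1:ℝ) 1, ∫ φ in Set.Ioo (0:ℝ) Real.pi,
          Φ w μ φ := by
    rw [show (∫ x in SS, Φ x.1 x.2.1 x.2.2)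
        = ∫ x, Φ x.1 x.2.1 x.2.2 ∂((volume : Measure (ℝ × ℝ × ℝ)).restrict SS) from rfl,
      hres, integral_prod _ hPhiInt2]
    refine integral_congr_ae ?_
    filter_upwards [hPhiInt2.prod_right_ae] with w hw
    rw [integral_prod _ hw]
  -- assemble
  have hLHS : ∫ k, f k = ∫ p, g p :=
    (me3_measurePreserving.integral_comp me3.measurableEmbedding f).symm
  rw [hLHS, hdouble, hAint, hFub]
  simp only [integral_Icc_eq_integral_Ioo]
  ring
end
end

section
/- Let α_K > 0, c_k > 0, E_x, E_y ∈ ℝ, and define for w > 0, −1 < μ < 1, φ ∈ ℝ: g₃(w,μ,φ) = −2 c_k (√(w(1+α_K w))/(1+2α_K w)) [μ E_x + √(1−μ²) cos φ · E_y], g₄(w,μ,φ) = −c_k (√(1−μ²)/√(w(1+α_K w))) [√(1−μ²) E_x − μ cos φ · E_y], g₅(w,μ,φ) = c_k (sin φ/(√(w(1+α_K w)) √(1−μ²))) E_y, and s(w) = √(w(1+α_K w))(1+2α_K w). Then for all such (w, μ, φ): ∂/∂w [g₃ s] + ∂/∂μ [g₄ s] + ∂/∂φ [g₅ s] = 0.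 -/
/-- The weighted field `(g₃ s, g₄ s, g₅ s)` of the 2D transformed Boltzmann equation is
divergence-free: `∂_w(g₃ s) + ∂_μ(g₄ s) + ∂_φ(g₅ s) = 0` for `w > 0`, `−1 < μ < 1`. -/
theorem stmt_8 (αK ck Ex Ey : ℝ) (hαK : 0 < αK) (hck : 0 < ck)
    (g₃ g₄ g₅ : ℝ → ℝ → ℝ → ℝ) (s : ℝ → ℝ)
    (hg₃ : ∀ w μ φ, g₃ w μ φ = -2 * ck * (Real.sqrt (w * (1 + αK * w)) / (1 + 2 * αK * w)) *
      (μ * Ex + Real.sqrt (1 - μ ^ 2) * Real.cos φ * Ey))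
    (hg₄ : ∀ w μ φ, g₄ w μ φ = -ck * (Real.sqrt (1 - μ ^ 2) / Real.sqrt (w * (1 + αK * w))) *
      (Real.sqrt (1 - μ ^ 2) * Ex - μ * Real.cos φ * Ey))
    (hg₅ : ∀ w μ φ, g₅ w μ φ = ck *
      (Real.sin φ / (Real.sqrt (w * (1 + αK * w)) * Real.sqrt (1 - μ ^ 2))) * Ey)
    (hs : ∀ w, s w = Real.sqrt (w * (1 + αK * w)) * (1 + 2 * αK * w)) :
    ∀ w μ φ : ℝ, 0 < w → -1 < μ → μ < 1 →
      deriv (fun w' => g₃ w' μ φ * s w') w +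
        deriv (fun μ' => g₄ w μ' φ * s w) μ +
          deriv (fun φ' => g₅ w μ φ' * s w) φ = 0 := by
  intro w μ φ hw hμ1 hμ2
  have hX : 0 < w * (1 + αK * w) := mul_pos hw (by nlinarith [mul_pos hαK hw])
  set r := Real.sqrt (w * (1 + αK * w)) with hr
  have hrpos : 0 < r := Real.sqrt_pos.mpr hX
  have hrne : r ≠ 0 := ne_of_gt hrpos
  have hq2pos : 0 < 1 - μ ^ 2 := by nlinarith
  set q := Real.sqrt (1 - μ ^ 2) with hq
  have hqpos : 0 < q := Real.sqrt_pos.mpr hq2pos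
  have hqne : q ≠ 0 := ne_of_gt hqpos
  have hqsq : q * q = 1 - μ ^ 2 := Real.mul_self_sqrt (le_of_lt hq2pos)
  -- w-derivative
  have hA : (fun w' => g₃ w' μ φ * s w') =ᶠ[nhds w]
      (fun w' => (-2 * ck * (μ * Ex + q * Real.cos φ * Ey)) * (w' + αK * w' ^ 2)) := by
    filter_upwards [eventually_gt_nhds hw] with w' hw'
    have hpos : 0 < 1 + αK * w' := by nlinarith [mul_pos hαK hw']
    have hden : (1 + 2 * αK * w') ≠ 0 := by nlinarith [mul_pos hαK hw']
    have hsq : Real.sqrt w' * Real.sqrt (1 + αK * w') *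
        (Real.sqrt w' * Real.sqrt (1 + αK * w')) = w' * (1 + αK * w') := by
      rw [← Real.sqrt_mul hw'.le]
      exact Real.mul_self_sqrt (le_of_lt (mul_pos hw' hpos))
    rw [hg₃, hs]
    field_simp
    have h : Real.sqrt (w' * (1 + w' * αK)) ^ 2 = w' * (1 + w' * αK) :=
      Real.sq_sqrt (by nlinarith [mul_pos hαK hw'])
    linear_combination (-(μ * Ex + Real.sqrt (1 - μ ^ 2) * Real.cos φ * Ey)) * h +
      (w' * (1 + w' * αK) * Real.cos φ * Ey) * hq
  have hDw : deriv (fun w' => g₃ w' μ φ * s w') w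
      = (-2 * ck * (μ * Ex + q * Real.cos φ * Ey)) * (1 + 2 * αK * w) := by
    rw [hA.deriv_eq]
    have h1 : HasDerivAt (fun w' : ℝ => w' + αK * w' ^ 2) (1 + αK * (2 * w)) w := by
      exact ((hasDerivAt_id w).add ((hasDerivAt_pow 2 w).const_mul αK)).congr_deriv (by norm_num)
    have := (h1.const_mul (-2 * ck * (μ * Ex + q * Real.cos φ * Ey))).deriv
    rw [this]; ring
  -- μ-derivative
  have hB : (fun μ' => g₄ w μ' φ * s w) =ᶠ[nhds μ]
      (fun μ' => (-ck * (1 + 2 * αK * w)) *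
        ((1 - μ' ^ 2) * Ex - μ' * Real.sqrt (1 - μ' ^ 2) * Real.cos φ * Ey)) := by
    have h1 : ∀ᶠ μ' in nhds μ, -1 < μ' := eventually_gt_nhds hμ1
    have h2 : ∀ᶠ μ' in nhds μ, μ' < 1 := eventually_lt_nhds hμ2
    filter_upwards [h1, h2] with μ' ha hb
    have hq' : 0 ≤ 1 - μ' ^ 2 := by nlinarith
    have hsq : Real.sqrt (1 - μ' ^ 2) * Real.sqrt (1 - μ' ^ 2) = 1 - μ' ^ 2 :=
      Real.mul_self_sqrt hq'
    rw [hg₄, hs]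
    field_simp
    linear_combination (-Ex) * hsq
  have hDμ : deriv (fun μ' => g₄ w μ' φ * s w) μ
      = (-ck * (1 + 2 * αK * w)) *
        ((-2 * μ) * Ex - (q + μ * ((-2 * μ) / (2 * q))) * Real.cos φ * Ey) := by
    rw [hB.deriv_eq]
    have hin : HasDerivAt (fun μ' : ℝ => 1 - μ' ^ 2) (-2 * μ) μ := by
      exact ((hasDerivAt_const μ (1:ℝ)).sub (hasDerivAt_pow 2 μ)).congr_deriv (by norm_num)
    have hsqrt : HasDerivAt (fun μ' : ℝ => Real.sqrt (1 - μ' ^ 2))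
        ((-2 * μ) / (2 * q)) μ := hin.sqrt (by positivity)
    have hmul : HasDerivAt (fun μ' : ℝ => μ' * Real.sqrt (1 - μ' ^ 2))
        (1 * q + μ * ((-2 * μ) / (2 * q))) μ := (hasDerivAt_id μ).mul hsqrt
    have h3 : HasDerivAt (fun μ' : ℝ =>
        (1 - μ' ^ 2) * Ex - μ' * Real.sqrt (1 - μ' ^ 2) * Real.cos φ * Ey)
        ((-2 * μ) * Ex - (1 * q + μ * ((-2 * μ) / (2 * q))) * Real.cos φ * Ey) μ := by
      exact ((hin.mul_const Ex).sub ((hmul.mul_const (Real.cos φ)).mul_const Ey))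
    have := (h3.const_mul (-ck * (1 + 2 * αK * w))).deriv
    rw [this]; ring
  -- φ-derivative
  have hC : (fun φ' => g₅ w μ φ' * s w)
      = (fun φ' => (ck * Ey * (1 + 2 * αK * w) / q) * Real.sin φ') := by
    funext φ'
    rw [hg₅, hs]
    field_simp
    ring
  have hDφ : deriv (fun φ' => g₅ w μ φ' * s w) φ
      = (ck * Ey * (1 + 2 * αK * w) / q) * Real.cos φ := by
    rw [hC]
    have := ((Real.hasDerivAt_sin φ).const_mul (ck * Ey * (1 + 2 * αK * w) / q)).deriv
    rw [this]
  rw [hDw, hDμ, hDφ]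
  field_simp
  linear_combination (-ck * (1 + 2 * αK * w) * Real.cos φ * Ey) * hqsq
end
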